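/- arXiv:0810.1718 — 5 statements merged into one kernel-verified Lean document; each statement's English description precedes it below -/
import Mathlib

section
/- If (X_n) is a stationary second-order process with covariance σ_X, and (T_n) is a random walk with i.i.d. positive integer increments independent of X, with T_0 = 0, then the sampled process Y_n = X_{T_n} is stationary with covariance σ_Y(h) = E[σ_X(T_h)] = Σ_{j≥h} σ_X(j) S^{*h}(j) for h ≥ 1, where S^{*h} is the h-fold convolution of the increment law S. -/
open MeasureTheory ProbabilityTheory

/-! Because `X` is independent of the walk, an expectation `E[g(N, X)]` with `N` a function of
the increments can be computed by freezing `N` at each of its (countably many) values, i.e. by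
Fubini on the product of the two laws. With `N = (T n, T (n + h) - T n)` this turns
`(X_{T n} - μ)(X_{T (n+h)} - μ)` into `σ_X (T (n + h) - T n)`, and `T (n + h) - T n`, a sum of
`h` consecutive i.i.d. increments, has the law of `T h`. The bound `|σ_X| ≤ σ_X 0` provides all
the integrability needed. -/

section Freezing

variable {Ω α κ : Type*} [MeasurableSpace Ω] [MeasurableSpace α] [MeasurableSpace κ]
  [Countable κ] [MeasurableSingletonClass κ] {P : Measure Ω}

theorem integral_comp_eq_integral_integral_of_indepFun [IsFiniteMeasure P]
    {U : Ω → α} {N : Ω → κ}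
    (hU : AEMeasurable U P) (hN : AEMeasurable N P) (hUN : IndepFun U N P)
    {g : κ → α → ℝ} (hg : ∀ k, Measurable (g k))
    (hgi : ∀ k, Integrable (fun ω => g k (U ω)) P) {C : ℝ}
    (hC : ∀ k, ∫ ω, |g k (U ω)| ∂P ≤ C) :
    ∫ ω, g (N ω) (U ω) ∂P = ∫ ω, ∫ ω', g (N ω) (U ω') ∂P ∂P := by
  set F : α × κ → ℝ := fun p => g p.2 p.1
  have hF : Measurable F := measurable_from_prod_countable_left hg
  have hlaw : P.map (fun ω => (U ω, N ω)) = (P.map U).prod (P.map N) :=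
    (indepFun_iff_map_prod_eq_prod_map_map hU hN).1 hUN
  have hF_int : Integrable F ((P.map U).prod (P.map N)) := by
    refine (integrable_prod_iff' hF.aestronglyMeasurable).2
      ⟨ae_of_all _ fun k => (integrable_map_measure (hg k).aestronglyMeasurable hU).2 (hgi k),
        Integrable.of_bound (measurable_of_countable _).aestronglyMeasurable C
          (ae_of_all _ fun k => ?_)⟩
    rw [integral_map hU (hg k).norm.aestronglyMeasurable, Real.norm_of_nonneg
      (integral_nonneg fun _ => norm_nonneg _)]
    simpa only [Real.norm_eq_abs] using hC k
  calc ∫ ω, g (N ω) (U ω) ∂P = ∫ p, F p ∂(P.map fun ω => (U ω, N ω)) :=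
        (integral_map (hU.prodMk hN) hF.aestronglyMeasurable).symm
    _ = ∫ k, ∫ x, g k x ∂(P.map U) ∂(P.map N) := by rw [hlaw, integral_prod_symm F hF_int]
    _ = ∫ ω, ∫ ω', g (N ω) (U ω') ∂P ∂P := by
        rw [integral_map hN (measurable_of_countable _).aestronglyMeasurable]
        simp_rw [integral_map hU (hg _).aestronglyMeasurable]

theorem integral_comp_eq_tsum_map_singleton {N : Ω → κ} (hN : AEMeasurable N P) {f : κ → ℝ}
    (hf : Integrable f (P.map N)) :
    ∫ ω, f (N ω) ∂P = ∑' k, f k * (P.map N {k}).toReal := by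
  rw [← integral_map hN (measurable_of_countable f).aestronglyMeasurable,
    integral_countable hf]
  exact tsum_congr fun k => by rw [smul_eq_mul, mul_comm, measureReal_def]

end Freezing

theorem integral_abs_mul_le_of_memLp_two {Ω : Type*} [MeasurableSpace Ω] {P : Measure Ω}
    {f g : Ω → ℝ} (hf : MemLp f 2 P) (hg : MemLp g 2 P) :
    ∫ ω, |f ω * g ω| ∂P ≤ ((∫ ω, f ω ^ 2 ∂P) + ∫ ω, g ω ^ 2 ∂P) / 2 := by
  rw [← integral_add hf.integrable_sq hg.integrable_sq, ← integral_div]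
  refine integral_mono (hf.integrable_mul hg).abs
    ((hf.integrable_sq.add hg.integrable_sq).div_const 2) fun ω => ?_
  have := two_mul_le_add_sq |f ω| |g ω|
  simp only [abs_mul, sq_abs] at this ⊢
  linarith

section Stationary

variable {Ω : Type*} [MeasurableSpace Ω] {P : Measure Ω} [IsProbabilityMeasure P]
  {X : ℕ → Ω → ℝ} {μ : ℝ} {σ : ℕ → ℝ}

theorem integral_abs_centered_mul_le_of_stationary_cov (hX : ∀ n, MemLp (X n) 2 P)
    (hcov : ∀ n h, ∫ ω, (X n ω - μ) * (X (n + h) ω - μ) ∂P = σ h) (s t : ℕ) :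
    ∫ ω, |(X s ω - μ) * (X t ω - μ)| ∂P ≤ σ 0 := by
  have hvar : ∀ n, ∫ ω, (X n ω - μ) ^ 2 ∂P = σ 0 := fun n => by
    simpa only [add_zero, ← sq] using hcov n 0
  have := integral_abs_mul_le_of_memLp_two ((hX s).sub (memLp_const μ))
    ((hX t).sub (memLp_const μ))
  simp only [Pi.sub_apply, hvar] at this
  linarith

theorem abs_le_apply_zero_of_stationary_cov (hX : ∀ n, MemLp (X n) 2 P)
    (hcov : ∀ n h, ∫ ω, (X n ω - μ) * (X (n + h) ω - μ) ∂P = σ h) (h : ℕ) :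
    |σ h| ≤ σ 0 := by
  rw [← hcov 0 h, zero_add]
  exact abs_integral_le_integral_abs.trans
    (integral_abs_centered_mul_le_of_stationary_cov hX hcov 0 h)

theorem integral_abs_le_apply_zero_of_stationary_cov (hX : ∀ n, MemLp (X n) 2 P)
    (hcov : ∀ n h, ∫ ω, (X n ω - μ) * (X (n + h) ω - μ) ∂P = σ h) (s : ℕ) :
    ∫ ω, |X s ω| ∂P ≤ (σ 0 + 1) / 2 + |μ| := by
  have hvar : ∫ ω, (X s ω - μ) ^ 2 ∂P = σ 0 := by
    simpa only [add_zero, ← sq] using hcov s 0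
  have hcentered :=
    integral_abs_mul_le_of_memLp_two ((hX s).sub (memLp_const μ)) (memLp_const 1)
  simp only [Pi.sub_apply, mul_one, one_pow, integral_const, probReal_univ, smul_eq_mul, hvar]
    at hcentered
  have hXμ : Integrable (fun ω => X s ω - μ) P :=
    ((hX s).sub (memLp_const μ)).integrable one_le_two
  calc ∫ ω, |X s ω| ∂P ≤ ∫ ω, (|X s ω - μ| + |μ|) ∂P :=
        integral_mono ((hX s).integrable one_le_two).abs (hXμ.abs.add (integrable_const _))
          fun ω => by simpa using abs_add_le (X s ω - μ) μ
    _ = ∫ ω, |X s ω - μ| ∂P + |μ| := by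
        rw [integral_add hXμ.abs (integrable_const _)]; simp
    _ ≤ (σ 0 + 1) / 2 + |μ| := by linarith

theorem integral_sample_eq_of_stationary_cov (hX : ∀ n, MemLp (X n) 2 P)
    (hmean : ∀ n, ∫ ω, X n ω ∂P = μ)
    (hcov : ∀ n h, ∫ ω, (X n ω - μ) * (X (n + h) ω - μ) ∂P = σ h) {N : Ω → ℕ}
    (hN : AEMeasurable N P) (hXN : IndepFun (fun ω n => X n ω) N P) :
    ∫ ω, X (N ω) ω ∂P = μ := by
  rw [integral_comp_eq_integral_integral_of_indepFun (g := fun t x => x t)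
    (aemeasurable_pi_lambda _ fun n => (hX n).aestronglyMeasurable.aemeasurable) hN hXN
    measurable_pi_apply (fun t => (hX t).integrable one_le_two)
    (integral_abs_le_apply_zero_of_stationary_cov hX hcov)]
  simp [hmean]

theorem integral_centered_sample_mul_eq_of_stationary_cov (hX : ∀ n, MemLp (X n) 2 P)
    (hcov : ∀ n h, ∫ ω, (X n ω - μ) * (X (n + h) ω - μ) ∂P = σ h) {N D : Ω → ℕ}
    (hN : AEMeasurable N P) (hD : AEMeasurable D P)
    (hXND : IndepFun (fun ω n => X n ω) (fun ω => (N ω, D ω)) P) :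
    ∫ ω, (X (N ω) ω - μ) * (X (N ω + D ω) ω - μ) ∂P = ∫ ω, σ (D ω) ∂P := by
  rw [integral_comp_eq_integral_integral_of_indepFun (N := fun ω => (N ω, D ω))
    (g := fun p x => (x p.1 - μ) * (x (p.1 + p.2) - μ))
    (aemeasurable_pi_lambda _ fun n => (hX n).aestronglyMeasurable.aemeasurable)
    (hN.prodMk hD) hXND (fun p => by fun_prop)
    (fun p => ((hX _).sub (memLp_const μ)).integrable_mul ((hX _).sub (memLp_const μ)))
    (fun p => integral_abs_centered_mul_le_of_stationary_cov hX hcov _ _)]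
  simp only [hcov]

end Stationary

theorem ProbabilityTheory.iIndepFun.identDistrib_sum_range_add {Ω β : Type*} [MeasurableSpace Ω]
    {P : Measure Ω} [AddCommMonoid β] [MeasurableSpace β] [MeasurableAdd₂ β]
    {Δ : ℕ → Ω → β}
    (hΔ : iIndepFun Δ P) (hid : ∀ i j, IdentDistrib (Δ i) (Δ j) P P) (n h : ℕ) :
    IdentDistrib (fun ω => ∑ i ∈ Finset.range h, Δ (n + i) ω)
      (fun ω => ∑ i ∈ Finset.range h, Δ i ω) P P :=
  (IdentDistrib.pi (fun i => hid (n + i) i) (hΔ.precomp (add_right_injective n)) hΔ).comp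
    (Finset.measurable_sum _ fun i _ => measurable_pi_apply i)

theorem sampled_process_stationary_covariance_general
    {Ω : Type*} [MeasureSpace Ω] [IsProbabilityMeasure (ℙ : Measure Ω)]
    (X : ℕ → Ω → ℝ) (Δ : ℕ → Ω → ℕ)
    (hX2 : ∀ n, MemLp (X n) 2)
    (hΔindep : iIndepFun Δ)
    (hΔid : ∀ i j, IdentDistrib (Δ i) (Δ j))
    (hindep : IndepFun (fun ω (n : ℕ) => X n ω) (fun ω (n : ℕ) => Δ n ω))
    (μ : ℝ) (σX : ℕ → ℝ)
    (hmean : ∀ n, ∫ ω, X n ω = μ)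
    (hcov : ∀ n h, ∫ ω, (X n ω - μ) * (X (n + h) ω - μ) = σX h)
    (T : ℕ → Ω → ℕ) (hT : ∀ n ω, T n ω = ∑ j ∈ Finset.range n, Δ j ω)
    (Y : ℕ → Ω → ℝ) (hY : ∀ n ω, Y n ω = X (T n ω) ω) :
    (∀ n, ∫ ω, Y n ω = μ) ∧
    (∀ n h, ∫ ω, (Y n ω - μ) * (Y (n + h) ω - μ) = ∫ ω, σX (T h ω)) ∧
    (∀ h, 1 ≤ h →
      ∫ ω, σX (T h ω) =
        ∑' j : ℕ, σX j * (((ℙ : Measure Ω).map (T h)) {j}).toReal) := by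
  simp only [hY]
  obtain rfl : T = fun n ω => ∑ j ∈ Finset.range n, Δ j ω := funext₂ hT
  beta_reduce
  have hXΔ : ∀ {β : Type} [MeasurableSpace β] {ψ : (ℕ → ℕ) → β}, Measurable ψ →
      IndepFun (fun ω n => X n ω) (fun ω => ψ fun n => Δ n ω) :=
    fun hψ => hindep.comp measurable_id hψ
  have hΔ : AEMeasurable (fun ω n => Δ n ω) :=
    aemeasurable_pi_lambda _ fun n => (hΔid n n).aemeasurable_fst
  have hT : ∀ n, AEMeasurable fun ω => ∑ j ∈ Finset.range n, Δ j ω :=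
    fun n => (Finset.measurable_sum _ fun j _ => measurable_pi_apply j).comp_aemeasurable hΔ
  refine ⟨fun n => ?_, fun n h => ?_, fun h _ => ?_⟩
  · exact integral_sample_eq_of_stationary_cov hX2 hmean hcov (hT n)
      (hXΔ (ψ := fun d => ∑ j ∈ Finset.range n, d j) (by fun_prop))
  · simp only [Finset.sum_range_add]
    have hinc := hΔindep.identDistrib_sum_range_add hΔid n h
    rw [integral_centered_sample_mul_eq_of_stationary_cov hX2 hcov (hT n)
      hinc.aemeasurable_fst
      (hXΔ (ψ := fun d => (∑ j ∈ Finset.range n, d j, ∑ j ∈ Finset.range h, d (n + j)))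
        (by fun_prop))]
    exact (hinc.comp (measurable_of_countable σX)).integral_eq
  · exact integral_comp_eq_tsum_map_singleton (hT h) <|
      Integrable.of_bound (measurable_of_countable σX).aestronglyMeasurable (σX 0)
        (ae_of_all _ (abs_le_apply_zero_of_stationary_cov hX2 hcov))

/-- Random sampling of a stationary second-order process along a random walk:
the sampled process `Y n = X (T n)` is (second-order) stationary, its covariance is
`σ_Y h = E[σ_X (T h)]`, and for `h ≥ 1` this equals `∑_{j} σ_X(j) S^{*h}(j)`,
where `S^{*h}` is the law of `T h` (the `h`-fold convolution of the increment law). -/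
theorem sampled_process_stationary_covariance
    {Ω : Type*} [MeasureSpace Ω] [IsProbabilityMeasure (ℙ : Measure Ω)]
    (X : ℕ → Ω → ℝ) (Δ : ℕ → Ω → ℕ)
    (hXmeas : ∀ n, Measurable (X n))
    (hX2 : ∀ n, MemLp (X n) 2)
    (hΔmeas : ∀ j, Measurable (Δ j))
    (hΔpos : ∀ j ω, 1 ≤ Δ j ω)
    (hΔindep : iIndepFun Δ)
    (hΔid : ∀ i j, IdentDistrib (Δ i) (Δ j))
    (hindep : IndepFun (fun ω (n : ℕ) => X n ω) (fun ω (n : ℕ) => Δ n ω))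
    (μ : ℝ) (σX : ℕ → ℝ)
    (hmean : ∀ n, ∫ ω, X n ω = μ)
    (hcov : ∀ n h, ∫ ω, (X n ω - μ) * (X (n + h) ω - μ) = σX h)
    (T : ℕ → Ω → ℕ) (hT : ∀ n ω, T n ω = ∑ j ∈ Finset.range n, Δ j ω)
    (Y : ℕ → Ω → ℝ) (hY : ∀ n ω, Y n ω = X (T n ω) ω) :
    (∀ n, ∫ ω, Y n ω = μ) ∧
    (∀ n h, ∫ ω, (Y n ω - μ) * (Y (n + h) ω - μ) = ∫ ω, σX (T h ω)) ∧
    (∀ h, 1 ≤ h →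
      ∫ ω, σX (T h ω) =
        ∑' j : ℕ, σX j * (((ℙ : Measure Ω).map (T h)) {j}).toReal) :=
  sampled_process_stationary_covariance_general X Δ hX2 hΔindep hΔid hindep μ σX hmean hcov T hT Y
    hY
end

section
/- Let p ≥ 1. If Σ_h |σ_X(h)|^p < ∞, then Σ_h |σ_Y(h)|^p < ∞, where σ_Y(h) = E[σ_X(T_h)]. -/
/-!
Jensen's inequality gives `|σ_Y(h)|^p ≤ E|σ_X(T_h)|^p`. Since `h ↦ T_h(ω)` is injective for every
`ω`, the terms `|σ_X(T_h(ω))|^p` are distinct terms of the series `∑ₙ |σ_X(n)|^p`, so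
`∑_h E|σ_X(T_h)|^p = E ∑_h |σ_X(T_h)|^p ≤ ∑ₙ |σ_X(n)|^p`.
-/

open MeasureTheory ProbabilityTheory Real

open Finset in
theorem strictMono_sum_range_of_pos {M : Type*} [AddCommMonoid M] [PartialOrder M]
    [IsOrderedCancelAddMonoid M] {a : ℕ → M} (ha : ∀ j, 0 < a j) :
    StrictMono fun n => ∑ j ∈ range n, a j :=
  strictMono_nat_of_lt_succ fun n => by
    rw [sum_range_succ]
    exact lt_add_of_pos_right _ (ha n)

theorem norm_integral_rpow_le_integral_norm_rpow {α E : Type*} [MeasurableSpace α]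
    [NormedAddCommGroup E] [NormedSpace ℝ E] {μ : Measure α} [IsProbabilityMeasure μ]
    {f : α → E} {p : ℝ} (hp : 1 ≤ p) (hfp : Integrable (fun x => ‖f x‖ ^ p) μ) :
    ‖∫ x, f x ∂μ‖ ^ p ≤ ∫ x, ‖f x‖ ^ p ∂μ := by
  have hp0 : 0 < p := by linarith
  by_cases hf : Integrable f μ
  · calc ‖∫ x, f x ∂μ‖ ^ p ≤ (∫ x, ‖f x‖ ∂μ) ^ p := by
          gcongr
          exact norm_integral_le_integral_norm f
      _ ≤ ∫ x, ‖f x‖ ^ p ∂μ :=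
          (convexOn_rpow hp).map_integral_le (continuousOn_id.rpow_const fun _ _ => Or.inr hp0.le)
            isClosed_Ici (.of_forall fun x => norm_nonneg (f x)) hf.norm hfp
  · rw [integral_undef hf, norm_zero, zero_rpow hp0.ne']
    exact integral_nonneg fun x => by positivity

section SummableComp

variable {Ω α : Type*} [MeasurableSpace Ω] [MeasurableSpace α] [DiscreteMeasurableSpace α]
  {μ : Measure Ω} [IsFiniteMeasure μ] {g : α → ℝ}

theorem Summable.integrable_comp (hg0 : ∀ n, 0 ≤ g n) (hg : Summable g) {X : Ω → α}
    (hX : Measurable X) : Integrable (fun ω => g (X ω)) μ :=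
  .of_bound (Measurable.of_discrete.comp hX).aestronglyMeasurable (∑' n, g n) <|
    .of_forall fun ω => by
      rw [Real.norm_eq_abs, abs_of_nonneg (hg0 _)]
      exact hg.le_tsum _ fun n _ => hg0 n

theorem Summable.integral_comp_of_injective {ι : Type*} (hg0 : ∀ n, 0 ≤ g n) (hg : Summable g)
    {X : ι → Ω → α} (hX : ∀ i, Measurable (X i)) (hinj : ∀ ω, Function.Injective (X · ω)) :
    Summable fun i => ∫ ω, g (X i ω) ∂μ := by
  classical
  have hint (i : ι) := hg.integrable_comp (μ := μ) hg0 (hX i)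
  refine summable_of_sum_le (c := μ.real Set.univ * ∑' n, g n)
    (fun i => integral_nonneg fun ω => hg0 _) fun s => ?_
  have hpt (ω : Ω) : ∑ i ∈ s, g (X i ω) ≤ ∑' n, g n := by
    rw [← Finset.sum_image fun i _ j _ hij => hinj ω hij]
    exact hg.sum_le_tsum _ fun n _ => hg0 n
  calc ∑ i ∈ s, ∫ ω, g (X i ω) ∂μ = ∫ ω, ∑ i ∈ s, g (X i ω) ∂μ :=
        (integral_finsetSum s fun i _ => hint i).symm
    _ ≤ ∫ _, ∑' n, g n ∂μ := integral_mono (integrable_finsetSum s fun i _ => hint i)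
        (integrable_const _) hpt
    _ = μ.real Set.univ * ∑' n, g n := by rw [integral_const, smul_eq_mul]

end SummableComp

theorem summable_abs_pow_sampled_cov_general
    {Ω : Type*} [MeasureSpace Ω] [IsProbabilityMeasure (ℙ : Measure Ω)]
    (σX : ℕ → ℝ) (Δ : ℕ → Ω → ℕ)
    (hΔmeas : ∀ j, Measurable (Δ j))
    (hΔpos : ∀ j ω, 1 ≤ Δ j ω)
    (T : ℕ → Ω → ℕ) (hT : ∀ n ω, T n ω = ∑ j ∈ Finset.range n, Δ j ω)
    (σY : ℕ → ℝ) (hσY : ∀ h, σY h = ∫ ω, σX (T h ω))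
    (p : ℝ) (hp : 1 ≤ p)
    (hsum : Summable (fun h : ℕ => |σX h| ^ p)) :
    Summable (fun h : ℕ => |σY h| ^ p) := by
  have hT_eq (h : ℕ) : T h = fun ω => ∑ j ∈ Finset.range h, Δ j ω := funext (hT h)
  have hTmeas (h : ℕ) : Measurable (T h) := by
    rw [hT_eq]
    exact Finset.measurable_sum _ fun j _ => hΔmeas j
  have hTinj (ω : Ω) : Function.Injective (T · ω) := by
    simpa only [hT_eq] using (strictMono_sum_range_of_pos (hΔpos · ω)).injective
  have hnonneg (n : ℕ) : 0 ≤ |σX n| ^ p := by positivity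
  refine (hsum.integral_comp_of_injective (μ := ℙ) hnonneg hTmeas hTinj).of_nonneg_of_le
    (fun h => by positivity) fun h => ?_
  rw [hσY]
  simpa only [Real.norm_eq_abs] using norm_integral_rpow_le_integral_norm_rpow
    (f := fun ω => σX (T h ω)) hp (hsum.integrable_comp (μ := ℙ) hnonneg (hTmeas h))

/-- If `∑ |σ_X(h)|^p < ∞` for some `p ≥ 1`, then `∑ |σ_Y(h)|^p < ∞`
where `σ_Y(h) = E[σ_X(T_h)]` and `T` is a random walk with i.i.d. positive integer
increments. -/
theorem summable_abs_pow_sampled_cov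
    {Ω : Type*} [MeasureSpace Ω] [IsProbabilityMeasure (ℙ : Measure Ω)]
    (σX : ℕ → ℝ) (Δ : ℕ → Ω → ℕ)
    (hΔmeas : ∀ j, Measurable (Δ j))
    (hΔpos : ∀ j ω, 1 ≤ Δ j ω)
    (hΔindep : iIndepFun Δ)
    (hΔid : ∀ i j, IdentDistrib (Δ i) (Δ j))
    (T : ℕ → Ω → ℕ) (hT : ∀ n ω, T n ω = ∑ j ∈ Finset.range n, Δ j ω)
    (σY : ℕ → ℝ) (hσY : ∀ h, σY h = ∫ ω, σX (T h ω))
    (p : ℝ) (hp : 1 ≤ p)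
    (hsum : Summable (fun h : ℕ => |σX h| ^ p)) :
    Summable (fun h : ℕ => |σY h| ^ p) :=
  summable_abs_pow_sampled_cov_general σX Δ hΔmeas hΔpos T hT σY hσY p hp hsum
end

section
/- Suppose σ_X(h) = h^{-α} L(h) with 0 < α < 1 and L slowly varying at infinity and ultimately monotone. If E[T_1] < ∞, then σ_Y(h) = E[σ_X(T_h)] satisfies σ_Y(h) ~ (E[T_1])^{-α} h^{-α} L(h) as h → ∞. -/
/-!
By the strong law of large numbers `T_h / h → E[T₁]` almost surely. For fixed `0 < a < b`,
ultimate monotonicity of `L` squeezes `L (T_h) / L h` between `L (a h) / L h` and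
`L (b h) / L h` as soon as `a h ≤ T_h ≤ b h`, so it tends to `1`; hence
`σ_X(T_h) / σ_X(h) = (T_h / h)^{-α} L(T_h) / L(h) → E[T₁]^{-α}` almost surely. Since
`T_h ≥ h`, Potter's bound `L t ≤ C (t / h)^α L h` for `t ≥ h` dominates these ratios by `C`,
and dominated convergence gives the limit of their expectations.
-/

open MeasureTheory ProbabilityTheory Real Filter Topology Set

def IsSlowlyVarying (L : ℝ → ℝ) : Prop :=
  ∀ c : ℝ, 0 < c → Tendsto (fun x : ℝ => L (c * x) / L x) atTop (𝓝 1)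

namespace IsSlowlyVarying

variable {L : ℝ → ℝ}

theorem tendsto_div_of_tendsto_div (hL : IsSlowlyVarying L) (hpos : ∀ x, 0 < x → 0 < L x)
    (hmono : ∃ M, MonotoneOn L (Ici M) ∨ AntitoneOn L (Ici M))
    {ι : Type*} {l : Filter ι} {x t : ι → ℝ} {c : ℝ} (hc : 0 < c)
    (hx : Tendsto x l atTop) (ht : Tendsto (fun i => t i / x i) l (𝓝 c)) :
    Tendsto (fun i => L (t i) / L (x i)) l (𝓝 1) := by
  obtain ⟨M, hM⟩ := hmono
  have hlow := (hL (c / 2) (half_pos hc)).comp hx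
  have hhigh := (hL (2 * c) (by positivity)).comp hx
  have hsandwich : ∀ᶠ i in l, 0 < L (x i) ∧
      min (L (c / 2 * x i)) (L (2 * c * x i)) ≤ L (t i) ∧
      L (t i) ≤ max (L (c / 2 * x i)) (L (2 * c * x i)) := by
    filter_upwards [hx.eventually_gt_atTop 0,
      (hx.const_mul_atTop (half_pos hc)).eventually_ge_atTop M,
      ht.eventually (eventually_gt_nhds (half_lt_self hc)),
      ht.eventually (eventually_lt_nhds (by linarith : c < 2 * c))] with i hx0 hxM hlo hhi
    have ha : c / 2 * x i ≤ t i := by rw [lt_div_iff₀ hx0] at hlo; linarith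
    have hb : t i ≤ 2 * c * x i := by rw [div_lt_iff₀ hx0] at hhi; linarith
    have hta : t i ∈ Ici M := hxM.trans ha
    have htb : 2 * c * x i ∈ Ici M := hxM.trans (ha.trans hb)
    refine ⟨hpos _ hx0, ?_⟩
    rcases hM with hM | hM
    · exact ⟨min_le_of_left_le (hM hxM hta ha), le_max_of_le_right (hM hta htb hb)⟩
    · exact ⟨min_le_of_right_le (hM hta htb hb), le_max_of_le_left (hM hxM hta ha)⟩
  refine tendsto_of_tendsto_of_tendsto_of_le_of_le' (by simpa using hlow.min hhigh)
    (by simpa using hlow.max hhigh) ?_ ?_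
  · filter_upwards [hsandwich] with i ⟨hLx, hmin, _⟩
    simpa only [Function.comp, min_div_div_right hLx.le] using
      div_le_div_of_nonneg_right hmin hLx.le
  · filter_upwards [hsandwich] with i ⟨hLx, _, hmax⟩
    simpa only [Function.comp, max_div_div_right hLx.le] using
      div_le_div_of_nonneg_right hmax hLx.le

-- Iterate `L (2 * y) ≤ 2 ^ δ * L y` up to the dyadic scale of `t / x`.
theorem potter_bound_of_monotoneOn (hL : IsSlowlyVarying L) (hpos : ∀ x, 0 < x → 0 < L x)
    {M : ℝ} (hM : MonotoneOn L (Ici M)) {δ : ℝ} (hδ : 0 < δ) :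
    ∃ x₀, ∀ x t, x₀ ≤ x → x ≤ t → L t ≤ 2 ^ δ * (t / x) ^ δ * L x := by
  obtain ⟨x₀, hx₀⟩ := eventually_atTop.1 <| ((hL 2 two_pos).eventually_lt_const
    (one_lt_rpow one_lt_two hδ)).and ((eventually_ge_atTop M).and (eventually_gt_atTop 0))
  have hdouble : ∀ y, x₀ ≤ y → L (2 * y) ≤ 2 ^ δ * L y := fun y hy =>
    ((div_lt_iff₀ (hpos y (hx₀ y hy).2.2)).1 (hx₀ y hy).1).le
  refine ⟨x₀, fun x t hx hxt => ?_⟩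
  obtain ⟨-, hxM, hx0⟩ := hx₀ x hx
  have hgrow : ∀ n : ℕ, x ≤ 2 ^ n * x := fun n =>
    le_mul_of_one_le_left hx0.le (one_le_pow₀ one_le_two)
  have hiterate : ∀ n : ℕ, L (2 ^ n * x) ≤ (2 ^ δ) ^ n * L x := by
    intro n
    induction n with
    | zero => simp
    | succ n ih =>
      calc L (2 ^ (n + 1) * x) = L (2 * (2 ^ n * x)) := by ring_nf
        _ ≤ 2 ^ δ * L (2 ^ n * x) := hdouble _ (hx.trans (hgrow n))
        _ ≤ 2 ^ δ * ((2 ^ δ) ^ n * L x) := by gcongr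
        _ = (2 ^ δ) ^ (n + 1) * L x := by ring
  obtain ⟨n, hn, hn'⟩ := exists_nat_pow_near ((one_le_div hx0).2 hxt) one_lt_two
  calc L t ≤ L (2 ^ (n + 1) * x) :=
        hM (hxM.trans hxt) (hxM.trans (hgrow _)) ((div_le_iff₀ hx0).1 hn'.le)
    _ ≤ (2 ^ δ) ^ (n + 1) * L x := hiterate (n + 1)
    _ = 2 ^ δ * ((2 : ℝ) ^ n) ^ δ * L x := by rw [pow_succ, rpow_pow_comm zero_le_two]; ring
    _ ≤ 2 ^ δ * (t / x) ^ δ * L x := by gcongr; exact (hpos x hx0).le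

theorem exists_potter_bound (hL : IsSlowlyVarying L) (hpos : ∀ x, 0 < x → 0 < L x)
    (hmono : ∃ M, MonotoneOn L (Ici M) ∨ AntitoneOn L (Ici M)) {δ : ℝ} (hδ : 0 < δ) :
    ∃ C x₀, ∀ x t, x₀ ≤ x → x ≤ t → L t ≤ C * (t / x) ^ δ * L x := by
  obtain ⟨M, hM | hM⟩ := hmono
  · exact ⟨_, hL.potter_bound_of_monotoneOn hpos hM hδ⟩
  refine ⟨1, max M 1, fun x t hx hxt => ?_⟩
  have hx0 : 0 < x := by linarith [le_max_right M 1]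
  have hxM : x ∈ Ici M := (le_max_left M 1).trans hx
  calc L t ≤ L x := hM hxM (hxM.out.trans hxt) hxt
    _ ≤ 1 * (t / x) ^ δ * L x := by
        rw [one_mul]
        exact le_mul_of_one_le_left (hpos x hx0).le
          (one_le_rpow ((one_le_div hx0).2 hxt) hδ.le)

theorem tendsto_rpow_mul_div_of_tendsto_div (hL : IsSlowlyVarying L)
    (hpos : ∀ x, 0 < x → 0 < L x) (hmono : ∃ M, MonotoneOn L (Ici M) ∨ AntitoneOn L (Ici M))
    {α μ : ℝ} (hμ : 0 < μ) {τ : ℕ → ℝ} (hτ : Tendsto (fun h : ℕ => τ h / h) atTop (𝓝 μ)) :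
    Tendsto (fun h : ℕ => (τ h / h) ^ (-α) * (L (τ h) / L h)) atTop (𝓝 (μ ^ (-α))) := by
  simpa using (hτ.rpow_const (Or.inl hμ.ne')).mul
    (hL.tendsto_div_of_tendsto_div hpos hmono hμ tendsto_natCast_atTop_atTop hτ)

theorem tendsto_integral_rpow_mul_div {Ω : Type*} [MeasurableSpace Ω] {P : Measure Ω}
    [IsProbabilityMeasure P] (hL : IsSlowlyVarying L) (hpos : ∀ x, 0 < x → 0 < L x)
    (hmono : ∃ M, MonotoneOn L (Ici M) ∨ AntitoneOn L (Ici M)) {α μ : ℝ} (hα : 0 < α)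
    {τ : ℕ → Ω → ℕ} (hτ_meas : ∀ h, AEMeasurable (τ h) P) (hτ_ge : ∀ h ω, h ≤ τ h ω)
    (hτ : ∀ᵐ ω ∂P, Tendsto (fun h : ℕ => (τ h ω : ℝ) / h) atTop (𝓝 μ)) :
    Tendsto (fun h : ℕ => ∫ ω, ((τ h ω : ℝ) / h) ^ (-α) * (L (τ h ω) / L h) ∂P) atTop
      (𝓝 (μ ^ (-α))) := by
  have hμ : 1 ≤ μ := by
    obtain ⟨ω, hω⟩ := hτ.exists
    refine ge_of_tendsto hω ((eventually_ge_atTop 1).mono fun h hh => ?_)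
    exact (one_le_div (by exact_mod_cast hh)).2 (by exact_mod_cast hτ_ge h ω)
  obtain ⟨C, x₀, hC⟩ := hL.exists_potter_bound hpos hmono hα
  have hbound : ∀ x t, max x₀ 1 ≤ x → x ≤ t → ‖(t / x) ^ (-α) * (L t / L x)‖ ≤ C := by
    intro x t hx hxt
    have hx0 : 0 < x := by linarith [le_max_right x₀ 1]
    have ht0 : 0 < t := hx0.trans_le hxt
    have := hC x t ((le_max_left x₀ 1).trans hx) hxt
    have hLx := hpos x hx0
    have hLt := hpos t ht0
    rw [Real.norm_of_nonneg (by positivity), rpow_neg (by positivity), inv_mul_eq_div, div_div,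
      div_le_iff₀ (by positivity)]
    linarith
  have hlim := tendsto_integral_filter_of_dominated_convergence (μ := P)
    (F := fun h ω => ((τ h ω : ℝ) / h) ^ (-α) * (L (τ h ω) / L h)) (fun _ => C)
    (Eventually.of_forall fun h => (measurable_from_top.comp_aemeasurable (hτ_meas h)
      (g := fun n : ℕ => ((n : ℝ) / h) ^ (-α) * (L n / L h))).aestronglyMeasurable)
    ((tendsto_natCast_atTop_atTop.eventually_ge_atTop (max x₀ 1)).mono fun h hh =>
      ae_of_all _ fun ω => hbound _ _ hh (Nat.cast_le.2 (hτ_ge h ω)))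
    (integrable_const C)
    (hτ.mono fun ω hω => hL.tendsto_rpow_mul_div_of_tendsto_div hpos hmono (by linarith) hω)
  simpa using hlim

end IsSlowlyVarying

theorem ProbabilityTheory.strong_law_ae_nat {Ω : Type*} {m : MeasurableSpace Ω}
    {P : Measure Ω} {X : ℕ → Ω → ℕ} (hindep : Pairwise fun i j => IndepFun (X i) (X j) P)
    (hident : ∀ i, IdentDistrib (X i) (X 0) P P) (hint : Integrable (fun ω => (X 0 ω : ℝ)) P) :
    ∀ᵐ ω ∂P, Tendsto (fun n : ℕ => ((∑ j ∈ Finset.range n, X j ω : ℕ) : ℝ) / n) atTop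
      (𝓝 (∫ ω, (X 0 ω : ℝ) ∂P)) := by
  have hcast : Measurable (fun n : ℕ => (n : ℝ)) := measurable_from_top
  simpa only [Nat.cast_sum] using strong_law_ae_real (fun i ω => (X i ω : ℝ)) hint
    (fun i j hij => (hindep hij).comp hcast hcast) (fun i => (hident i).comp hcast)

theorem sampled_cov_equivalent_finite_mean_general
    {Ω : Type*} [MeasureSpace Ω] [IsProbabilityMeasure (ℙ : Measure Ω)]
    (α : ℝ) (hα0 : 0 < α)
    (L : ℝ → ℝ) (hLpos : ∀ x, 0 < x → 0 < L x)
    (hLslow : ∀ c : ℝ, 0 < c → Tendsto (fun x : ℝ => L (c * x) / L x) atTop (nhds 1))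
    (hLmono : ∃ M : ℝ, MonotoneOn L (Set.Ici M) ∨ AntitoneOn L (Set.Ici M))
    (σX : ℕ → ℝ) (hσX : ∀ h : ℕ, 1 ≤ h → σX h = (h : ℝ) ^ (-α) * L h)
    (Δ : ℕ → Ω → ℕ)
    (hΔpos : ∀ j ω, 1 ≤ Δ j ω)
    (hΔindep : iIndepFun Δ)
    (hΔid : ∀ i j, IdentDistrib (Δ i) (Δ j))
    (hΔint : Integrable (fun ω => (Δ 0 ω : ℝ)))
    (T : ℕ → Ω → ℕ) (hT : ∀ n ω, T n ω = ∑ j ∈ Finset.range n, Δ j ω)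
    (σY : ℕ → ℝ) (hσY : ∀ h, σY h = ∫ ω, σX (T h ω)) :
    Tendsto (fun h : ℕ => σY h / ((h : ℝ) ^ (-α) * L h)) atTop
      (nhds ((∫ ω, (Δ 0 ω : ℝ)) ^ (-α))) := by
  have hT_ge : ∀ h ω, h ≤ T h ω := fun h ω => by
    simpa [hT] using Finset.card_nsmul_le_sum (Finset.range h) (Δ · ω) 1 fun j _ => hΔpos j ω
  have hT_meas : ∀ h, AEMeasurable (T h) := fun h => by
    simpa only [← funext (hT h)] using
      Finset.aemeasurable_fun_sum (Finset.range h) fun j _ => (hΔid j 0).aemeasurable_fst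
  have hslln :
      ∀ᵐ ω, Tendsto (fun h : ℕ => (T h ω : ℝ) / h) atTop (𝓝 (∫ ω, (Δ 0 ω : ℝ))) := by
    filter_upwards [strong_law_ae_nat (fun i j hij => hΔindep.indepFun hij) (fun i => hΔid i 0)
      hΔint] with ω hω
    simpa only [hT] using hω
  refine (IsSlowlyVarying.tendsto_integral_rpow_mul_div hLslow hLpos hLmono hα0 hT_meas hT_ge
    hslln).congr' ?_
  filter_upwards [eventually_ge_atTop 1] with h hh
  rw [hσY, ← integral_div]
  congr 1 with ω
  have hT0 : (0 : ℝ) < T h ω := by exact_mod_cast hh.trans (hT_ge h ω)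
  rw [hσX _ (by exact_mod_cast hT0), mul_div_mul_comm, div_rpow hT0.le (Nat.cast_nonneg h)]

/-- If `σ_X(h) = h^{-α} L(h)` with `0 < α < 1`, `L` slowly varying at infinity and
ultimately monotone, and the sampling increments have finite mean `E[T₁] < ∞`, then
`σ_Y(h) = E[σ_X(T_h)] ∼ (E[T₁])^{-α} h^{-α} L(h)` as `h → ∞`. -/
theorem sampled_cov_equivalent_finite_mean
    {Ω : Type*} [MeasureSpace Ω] [IsProbabilityMeasure (ℙ : Measure Ω)]
    (α : ℝ) (hα0 : 0 < α) (hα1 : α < 1)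
    (L : ℝ → ℝ) (hLpos : ∀ x, 0 < x → 0 < L x)
    (hLslow : ∀ c : ℝ, 0 < c → Tendsto (fun x : ℝ => L (c * x) / L x) atTop (nhds 1))
    (hLmono : ∃ M : ℝ, MonotoneOn L (Set.Ici M) ∨ AntitoneOn L (Set.Ici M))
    (σX : ℕ → ℝ) (hσX : ∀ h : ℕ, 1 ≤ h → σX h = (h : ℝ) ^ (-α) * L h)
    (Δ : ℕ → Ω → ℕ)
    (hΔmeas : ∀ j, Measurable (Δ j))
    (hΔpos : ∀ j ω, 1 ≤ Δ j ω)
    (hΔindep : iIndepFun Δ)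
    (hΔid : ∀ i j, IdentDistrib (Δ i) (Δ j))
    (hΔint : Integrable (fun ω => (Δ 0 ω : ℝ)))
    (T : ℕ → Ω → ℕ) (hT : ∀ n ω, T n ω = ∑ j ∈ Finset.range n, Δ j ω)
    (σY : ℕ → ℝ) (hσY : ∀ h, σY h = ∫ ω, σX (T h ω)) :
    Tendsto (fun h : ℕ => σY h / ((h : ℝ) ^ (-α) * L h)) atTop
      (nhds ((∫ ω, (Δ 0 ω : ℝ)) ^ (-α))) :=
  sampled_cov_equivalent_finite_mean_general α hα0 L hLpos hLslow hLmono σX hσX Δ hΔpos hΔindep hΔid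
    hΔint T hT σY hσY
end

section
/- Assume |σ_X(h)| ≤ c h^{-α} with 0 < α < 1, and assume liminf_{x→∞} x^β P(T_1 > x) > 0 for some β ∈ (0,1). Then the sampled covariance satisfies |σ_Y(h)| ≤ C h^{-α/β} for some constant C and all large h. -/
open MeasureTheory ProbabilityTheory Real Filter Finset Topology

/-!
As every `Δ_j ≥ 1`, `|σ_Y(h)| ≤ c E[T_h^{-α}]`. The event `T_h < x` forces all `h` increments to be
at most `x`, so by independence it has probability `(1 - P(Δ_0 > x))^h ≤ exp(-ε h x^{-β})`, where
the tail hypothesis gives `P(Δ_0 > x) ≥ ε x^{-β}` for all `x ≥ 1`. Splitting `E[T_h^{-α}]` over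
the dyadic layers `s 2^{-k-1} ≤ T_h < s 2^{-k}` at the scale `s = h^{1/β}`, the `k`-th layer
contributes at most `h^{-α/β} 2^{(k+1)α} exp(-ε 2^{kβ})`, which is summable in `k`.
-/

noncomputable def dyadicTerm (α β ε : ℝ) (k : ℕ) : ℝ :=
  ((2 : ℝ) ^ (k + 1)) ^ α * exp (-ε * ((2 : ℝ) ^ k) ^ β)

lemma dyadicTerm_nonneg (α β ε : ℝ) (k : ℕ) : 0 ≤ dyadicTerm α β ε k := by
  unfold dyadicTerm; positivity

lemma dyadicTerm_mul_two_pow (α β ε : ℝ) (hβ : β ≠ 0) (k : ℕ) :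
    dyadicTerm α β ε k * 2 ^ k =
      2 ^ α * ((((2 : ℝ) ^ k) ^ β) ^ ((α + 1) / β) * exp (-ε * ((2 : ℝ) ^ k) ^ β)) := by
  have h2k : (0 : ℝ) < 2 ^ k := by positivity
  rw [dyadicTerm, ← rpow_mul h2k.le, mul_div_cancel₀ _ hβ, rpow_add_one h2k.ne', pow_succ',
    mul_rpow zero_le_two h2k.le]
  ring

lemma summable_dyadicTerm (α : ℝ) {β ε : ℝ} (hβ : 0 < β) (hε : 0 < ε) :
    Summable (dyadicTerm α β ε) := by
  have hy : Tendsto (fun k : ℕ => ((2 : ℝ) ^ k) ^ β) atTop atTop :=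
    (tendsto_rpow_atTop hβ).comp (tendsto_pow_atTop_atTop_of_one_lt one_lt_two)
  have hdecay : Tendsto (fun k => dyadicTerm α β ε k * 2 ^ k) atTop (𝓝 0) := by
    simp_rw [dyadicTerm_mul_two_pow α β ε hβ.ne']
    simpa using ((tendsto_rpow_mul_exp_neg_mul_atTop_nhds_zero _ ε hε).comp hy).const_mul (2 ^ α)
  refine Summable.of_norm_bounded_eventually_nat summable_geometric_two ?_
  filter_upwards [hdecay.eventually (gt_mem_nhds one_pos)] with k hk
  rw [norm_of_nonneg (dyadicTerm_nonneg α β ε k), one_div_pow, le_div_iff₀ (by positivity)]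
  exact hk.le

lemma rpow_neg_le_add_sum_dyadic {α s t : ℝ} (hα : 0 ≤ α) (hs : 0 < s) (ht : 0 < t) :
    ∀ K : ℕ, s ≤ 2 ^ K * t →
      t ^ (-α) ≤ s ^ (-α) + ∑ k ∈ range K, if t < s / 2 ^ k then (s / 2 ^ (k + 1)) ^ (-α) else 0
  | 0, hK => by simpa using rpow_le_rpow_of_nonpos hs (by simpa using hK) (neg_nonpos.2 hα)
  | K + 1, hK => by
    have hsum : 0 ≤ ∑ k ∈ range K, if t < s / 2 ^ k then (s / 2 ^ (k + 1)) ^ (-α) else 0 :=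
      sum_nonneg fun k _ => by split_ifs <;> positivity
    rw [sum_range_succ]
    by_cases hKt : s ≤ 2 ^ K * t
    · have := rpow_neg_le_add_sum_dyadic hα hs ht K hKt
      have : 0 ≤ if t < s / 2 ^ K then (s / 2 ^ (K + 1)) ^ (-α) else 0 := by
        split_ifs <;> positivity
      linarith
    · have hlt : t < s / 2 ^ K := by rw [lt_div_iff₀ (by positivity)]; linarith
      have hle : s / 2 ^ (K + 1) ≤ t := by rw [div_le_iff₀ (by positivity)]; linarith
      rw [if_pos hlt]
      have := rpow_le_rpow_of_nonpos (by positivity) hle (neg_nonpos.2 hα)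
      have : 0 ≤ s ^ (-α) := by positivity
      linarith

lemma rpow_inv_div_rpow_neg {h y : ℝ} (hh : 0 ≤ h) (hy : 0 < y) (α β : ℝ) :
    (h ^ β⁻¹ / y) ^ (-α) = h ^ (-(α / β)) * y ^ α := by
  rw [div_rpow (by positivity) hy.le, ← rpow_mul hh, rpow_neg hy.le, div_inv_eq_mul]
  congr 2
  ring

lemma exists_mul_rpow_neg_le_of_liminf_pos {β : ℝ} (hβ : 0 ≤ β) {p : ℝ → ℝ} (hp : Antitone p)
    (hp0 : ∀ x, 0 ≤ p x) (h : 0 < liminf (fun x => x ^ β * p x) atTop) :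
    ∃ ε > 0, ∀ x ≥ 1, ε * x ^ (-β) ≤ p x := by
  have hbdd : IsBoundedUnder (· ≥ ·) atTop fun x => x ^ β * p x :=
    isBoundedUnder_of_eventually_ge <| (eventually_ge_atTop 0).mono fun x hx => by
      have := hp0 x; positivity
  obtain ⟨N, hN⟩ := eventually_atTop.1 <| eventually_lt_of_lt_liminf (half_lt_self h) hbdd
  set ε := liminf (fun x => x ^ β * p x) atTop / 2
  have hfar : ∀ x ≥ max N 1, ε * x ^ (-β) ≤ p x := fun x hx => by
    have hx0 : 0 < x := by linarith [le_max_right N 1]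
    rw [rpow_neg hx0.le, ← div_eq_mul_inv, div_le_iff₀ (by positivity), mul_comm]
    exact (hN x (le_of_max_le_left hx)).le
  refine ⟨ε * (max N 1) ^ (-β), by positivity, fun x hx => ?_⟩
  rcases le_total (max N 1) x with hNx | hxN
  · calc ε * (max N 1) ^ (-β) * x ^ (-β) ≤ ε * x ^ (-β) := by
          gcongr
          exact mul_le_of_le_one_right (by positivity)
            (rpow_le_one_of_one_le_of_nonpos (le_max_right N 1) (by linarith))
      _ ≤ p x := hfar x hNx
  · calc ε * (max N 1) ^ (-β) * x ^ (-β) ≤ ε * (max N 1) ^ (-β) :=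
          mul_le_of_le_one_right (by positivity) (rpow_le_one_of_one_le_of_nonpos hx (by linarith))
      _ ≤ p (max N 1) := hfar _ le_rfl
      _ ≤ p x := hp hxN

section Integral

variable {Ω : Type*} [MeasurableSpace Ω] {μ : Measure Ω} [IsProbabilityMeasure μ]
  {f X : Ω → ℝ} {α c : ℝ}

lemma abs_integral_le_sum_dyadic (hα : 0 ≤ α) (hc : 0 ≤ c) {s : ℝ} (hs : 0 < s)
    (hX : Measurable X) (hX1 : ∀ ω, 1 ≤ X ω) (hf : ∀ ω, |f ω| ≤ c * X ω ^ (-α)) :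
    |∫ ω, f ω ∂μ| ≤ c * (s ^ (-α) +
      ∑ k ∈ range ⌈s⌉₊, (s / 2 ^ (k + 1)) ^ (-α) * μ.real {ω | X ω < s / 2 ^ k}) := by
  set K := ⌈s⌉₊
  have hK : ∀ ω, s ≤ 2 ^ K * X ω := fun ω => calc
    s ≤ K := Nat.le_ceil s
    _ ≤ 2 ^ K := by exact_mod_cast Nat.lt_two_pow_self.le
    _ ≤ 2 ^ K * X ω := le_mul_of_one_le_right (by positivity) (hX1 ω)
  set g : Ω → ℝ := fun ω => s ^ (-α) +
    ∑ k ∈ range K, {ω | X ω < s / 2 ^ k}.indicator (fun _ => (s / 2 ^ (k + 1)) ^ (-α)) ω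
  have hmeas : ∀ x : ℝ, MeasurableSet {ω | X ω < x} := fun x => measurableSet_lt hX measurable_const
  have hg : Integrable g μ := (integrable_const _).add <|
    integrable_finsetSum _ fun k _ => (integrable_const _).indicator (hmeas _)
  have hfg : ∀ ω, ‖f ω‖ ≤ c * g ω := fun ω => by
    have hω := rpow_neg_le_add_sum_dyadic hα hs (by linarith [hX1 ω]) K (hK ω)
    simp only [Set.indicator_apply, g]
    exact (hf ω).trans (mul_le_mul_of_nonneg_left hω hc)
  calc |∫ ω, f ω ∂μ| ≤ ∫ ω, c * g ω ∂μ :=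
        norm_integral_le_of_norm_le (hg.const_mul c) (ae_of_all _ hfg)
    _ = _ := by
        rw [integral_const_mul, integral_add (integrable_const _)
          (integrable_finsetSum _ fun k _ => (integrable_const _).indicator (hmeas _)),
          integral_finsetSum _ fun k _ => (integrable_const _).indicator (hmeas _)]
        simp only [integral_const, integral_indicator_const _ (hmeas _), probReal_univ, smul_eq_mul,
          mul_one, mul_comm]

lemma abs_integral_le_of_measureReal_lt_le_exp (hα : 0 ≤ α) (hc : 0 ≤ c) {β ε h : ℝ}
    (hβ : 0 < β) (hε : 0 < ε) (hh : 0 < h) (hX : Measurable X) (hX1 : ∀ ω, 1 ≤ X ω)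
    (hf : ∀ ω, |f ω| ≤ c * X ω ^ (-α))
    (htail : ∀ x ≥ 1, μ.real {ω | X ω < x} ≤ exp (-ε * h * x ^ (-β))) :
    |∫ ω, f ω ∂μ| ≤ c * (1 + ∑' k, dyadicTerm α β ε k) * h ^ (-(α / β)) := by
  set s := h ^ β⁻¹
  have hterm : ∀ k : ℕ, (s / 2 ^ (k + 1)) ^ (-α) * μ.real {ω | X ω < s / 2 ^ k}
      ≤ h ^ (-(α / β)) * dyadicTerm α β ε k := fun k => by
    rw [rpow_inv_div_rpow_neg hh.le (by positivity), mul_assoc]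
    gcongr
    rcases lt_or_ge (s / 2 ^ k) 1 with hsmall | hlarge
    · have : {ω | X ω < s / 2 ^ k} = ∅ :=
        Set.eq_empty_of_forall_notMem fun ω hω => by linarith [hX1 ω, hω.out]
      rw [this, measureReal_empty, mul_zero]
      exact dyadicTerm_nonneg α β ε k
    · have hexp : h * (s / 2 ^ k) ^ (-β) = ((2 : ℝ) ^ k) ^ β := by
        rw [rpow_inv_div_rpow_neg hh.le (by positivity), div_self hβ.ne', ← mul_assoc,
          rpow_neg_one, mul_inv_cancel₀ hh.ne', one_mul]
      calc _ ≤ ((2 : ℝ) ^ (k + 1)) ^ α * exp (-ε * h * (s / 2 ^ k) ^ (-β)) := by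
            gcongr; exact htail _ hlarge
        _ = dyadicTerm α β ε k := by rw [mul_assoc, hexp, dyadicTerm]
  calc |∫ ω, f ω ∂μ|
      ≤ c * (s ^ (-α) + ∑ k ∈ range ⌈s⌉₊,
          (s / 2 ^ (k + 1)) ^ (-α) * μ.real {ω | X ω < s / 2 ^ k}) :=
        abs_integral_le_sum_dyadic hα hc (by positivity) hX hX1 hf
    _ ≤ c * (h ^ (-(α / β)) + h ^ (-(α / β)) * ∑' k, dyadicTerm α β ε k) := by
        gcongr
        · rw [← rpow_mul hh.le, inv_mul_eq_div, neg_div]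
        · calc _ ≤ ∑ k ∈ range ⌈s⌉₊, h ^ (-(α / β)) * dyadicTerm α β ε k :=
                sum_le_sum fun k _ => hterm k
            _ = h ^ (-(α / β)) * ∑ k ∈ range ⌈s⌉₊, dyadicTerm α β ε k := (mul_sum _ _ _).symm
            _ ≤ _ := by
              gcongr
              exact (summable_dyadicTerm α hβ hε).sum_le_tsum _ fun k _ => dyadicTerm_nonneg α β ε k
    _ = _ := by ring

end Integral

section Independence

variable {Ω : Type*} [MeasurableSpace Ω] {μ : Measure Ω}

lemma measure_biInter_preimage_eq_pow {ι E : Type*} [MeasurableSpace E] {X : ι → Ω → E}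
    (hX : iIndepFun X μ) {i₀ : ι} (hid : ∀ i, IdentDistrib (X i) (X i₀) μ μ) {A : Set E}
    (hA : MeasurableSet A) (s : Finset ι) :
    μ (⋂ i ∈ s, X i ⁻¹' A) = μ (X i₀ ⁻¹' A) ^ s.card := by
  rw [iIndepFun_iff_measure_inter_preimage_eq_mul.1 hX s fun _ _ => hA,
    prod_congr rfl fun i _ => (hid i).measure_mem_eq hA, prod_const]

lemma measureReal_sum_lt_le_exp [IsProbabilityMeasure μ] {Δ : ℕ → Ω → ℕ}
    (hmeas : ∀ j, Measurable (Δ j)) (hindep : iIndepFun Δ μ)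
    (hid : ∀ j, IdentDistrib (Δ j) (Δ 0) μ μ) (n : ℕ) (x : ℝ) :
    μ.real {ω | ((∑ j ∈ range n, Δ j ω : ℕ) : ℝ) < x} ≤
      exp (-n * μ.real {ω | x < (Δ 0 ω : ℝ)}) := by
  set A : Set ℕ := {m | (m : ℝ) ≤ x}
  have hsub : {ω | ((∑ j ∈ range n, Δ j ω : ℕ) : ℝ) < x} ⊆ ⋂ j ∈ range n, Δ j ⁻¹' A := by
    intro ω hω
    simp only [Set.mem_iInter, Set.mem_preimage]
    intro j hj
    have : Δ j ω ≤ ∑ i ∈ range n, Δ i ω :=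
      single_le_sum (f := fun i => Δ i ω) (fun i _ => Nat.zero_le _) hj
    exact ((Nat.cast_le (α := ℝ)).2 this |>.trans_lt hω).le
  have hcompl : Δ 0 ⁻¹' A = {ω | x < (Δ 0 ω : ℝ)}ᶜ := by
    ext ω; simp [A]
  have hA : μ.real (Δ 0 ⁻¹' A) = 1 - μ.real {ω | x < (Δ 0 ω : ℝ)} := by
    have : MeasurableSet {ω | x < (Δ 0 ω : ℝ)} := hmeas 0 (.of_discrete (s := {m : ℕ | x < m}))
    rw [hcompl, probReal_compl_eq_one_sub this]
  calc _ ≤ μ.real (⋂ j ∈ range n, Δ j ⁻¹' A) := measureReal_mono hsub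
    _ = (1 - μ.real {ω | x < (Δ 0 ω : ℝ)}) ^ n := by
      rw [measureReal_def, measure_biInter_preimage_eq_pow hindep hid .of_discrete, card_range,
        ENNReal.toReal_pow, ← measureReal_def, hA]
    _ ≤ exp (-μ.real {ω | x < (Δ 0 ω : ℝ)}) ^ n :=
      pow_le_pow_left₀ (by simp [measureReal_le_one]) (one_sub_le_exp_neg _) n
    _ = _ := by rw [← exp_nat_mul]; ring_nf

end Independence

theorem sampled_cov_decay_heavy_tail_general
    {Ω : Type*} [MeasureSpace Ω] [IsProbabilityMeasure (ℙ : Measure Ω)]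
    (α c : ℝ) (hα0 : 0 < α) (hc : 0 < c)
    (σX : ℕ → ℝ) (hσX : ∀ h : ℕ, 1 ≤ h → |σX h| ≤ c * (h : ℝ) ^ (-α))
    (Δ : ℕ → Ω → ℕ)
    (hΔmeas : ∀ j, Measurable (Δ j))
    (hΔpos : ∀ j ω, 1 ≤ Δ j ω)
    (hΔindep : iIndepFun Δ)
    (hΔid : ∀ i j, IdentDistrib (Δ i) (Δ j))
    (β : ℝ) (hβ0 : 0 < β)
    (htail : 0 < liminf (fun x : ℝ =>
      x ^ β * ((ℙ : Measure Ω) {ω | x < (Δ 0 ω : ℝ)}).toReal) atTop)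
    (T : ℕ → Ω → ℕ) (hT : ∀ n ω, T n ω = ∑ j ∈ Finset.range n, Δ j ω)
    (σY : ℕ → ℝ) (hσY : ∀ h, σY h = ∫ ω, σX (T h ω)) :
    ∃ C : ℝ, 0 < C ∧ ∀ᶠ h : ℕ in atTop, |σY h| ≤ C * (h : ℝ) ^ (-(α / β)) := by
  set p : ℝ → ℝ := fun x => (ℙ : Measure Ω).real {ω | x < (Δ 0 ω : ℝ)}
  obtain ⟨ε, hε, hp⟩ := exists_mul_rpow_neg_le_of_liminf_pos (p := p) hβ0.le
    (fun x y hxy => measureReal_mono fun ω hω => hxy.trans_lt hω) (fun x => measureReal_nonneg)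
    htail
  have hS : 0 ≤ ∑' k, dyadicTerm α β ε k := tsum_nonneg (dyadicTerm_nonneg α β ε)
  refine ⟨c * (1 + ∑' k, dyadicTerm α β ε k), by positivity, ?_⟩
  filter_upwards [eventually_ge_atTop 1] with h hh
  have hT1 : ∀ ω, 1 ≤ T h ω := fun ω => calc
    1 ≤ h := hh
    _ = ∑ j ∈ range h, 1 := by simp
    _ ≤ T h ω := hT h ω ▸ sum_le_sum fun j _ => hΔpos j ω
  have hTmeas : Measurable fun ω => (T h ω : ℝ) :=
    measurable_from_nat.comp (funext (hT h) ▸ Finset.measurable_sum _ fun j _ => hΔmeas j)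
  have hTtail : ∀ x ≥ 1, (ℙ : Measure Ω).real {ω | (T h ω : ℝ) < x} ≤ exp (-ε * h * x ^ (-β)) :=
    fun x hx => calc
      _ ≤ exp (-h * p x) := by
        simpa only [hT] using measureReal_sum_lt_le_exp hΔmeas hΔindep (fun j => hΔid j 0) h x
      _ ≤ exp (-ε * h * x ^ (-β)) := exp_le_exp.2 <| by
        linarith [mul_le_mul_of_nonneg_left (hp x hx) h.cast_nonneg]
  rw [hσY]
  exact abs_integral_le_of_measureReal_lt_le_exp hα0.le hc.le hβ0 hε (by positivity) hTmeas
    (fun ω => by exact_mod_cast hT1 ω) (fun ω => hσX _ (hT1 ω)) hTtail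

/-- If `|σ_X(h)| ≤ c h^{-α}` with `0 < α < 1` and the increment law has a heavy tail,
`liminf_{x→∞} x^β P(T₁ > x) > 0` for some `β ∈ (0,1)`, then
`|σ_Y(h)| ≤ C h^{-α/β}` for some `C` and all large `h`. -/
theorem sampled_cov_decay_heavy_tail
    {Ω : Type*} [MeasureSpace Ω] [IsProbabilityMeasure (ℙ : Measure Ω)]
    (α c : ℝ) (hα0 : 0 < α) (hα1 : α < 1) (hc : 0 < c)
    (σX : ℕ → ℝ) (hσX : ∀ h : ℕ, 1 ≤ h → |σX h| ≤ c * (h : ℝ) ^ (-α))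
    (Δ : ℕ → Ω → ℕ)
    (hΔmeas : ∀ j, Measurable (Δ j))
    (hΔpos : ∀ j ω, 1 ≤ Δ j ω)
    (hΔindep : iIndepFun Δ)
    (hΔid : ∀ i j, IdentDistrib (Δ i) (Δ j))
    (β : ℝ) (hβ0 : 0 < β) (hβ1 : β < 1)
    (htail : 0 < liminf (fun x : ℝ =>
      x ^ β * ((ℙ : Measure Ω) {ω | x < (Δ 0 ω : ℝ)}).toReal) atTop)
    (T : ℕ → Ω → ℕ) (hT : ∀ n ω, T n ω = ∑ j ∈ Finset.range n, Δ j ω)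
    (σY : ℕ → ℝ) (hσY : ∀ h, σY h = ∫ ω, σX (T h ω)) :
    ∃ C : ℝ, 0 < C ∧ ∀ᶠ h : ℕ in atTop, |σY h| ≤ C * (h : ℝ) ^ (-(α / β)) :=
  sampled_cov_decay_heavy_tail_general α c hα0 hc σX hσX Δ hΔmeas hΔpos hΔindep hΔid β hβ0 htail T
    hT σY hσY
end

section
/- Assume σ_X(h) = h^{-α} L(h) with 0 < α < 1 and L slowly varying, and let β = sup{γ : E[T_1^γ] < ∞} ∈ (0,1). Then for every ε > 0 there is a constant C_1 > 0 such that σ_Y(h) = E[σ_X(T_h)] ≥ C_1 h^{-α/β - ε} for all large h; in fact σ_Y(h)/h^{-α/β - ε} → ∞. -/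
/-!
Fix `γ < β` with `K = E[Δ₀^γ] < ∞`. Since `x ↦ x^γ` is subadditive for `γ ≤ 1`,
`E[T_h^γ] ≤ K h`, so by Markov's inequality `T_h ≤ (2Kh)^{1/γ}` with probability at least `1/2`.
Potter's bounds for `L` give `σ_X(n) ≥ c n^{-α-δ}` for large `n` (and `σ_X` is bounded), hence
`σ_Y(h) ≥ (c/2) (2Kh)^{-(α+δ)/γ}`. Taking `γ` close to `β` and `δ` small makes the exponent
`(α+δ)/γ` smaller than `α/β + ε`.
-/

open MeasureTheory ProbabilityTheory Real Filter Set Topology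

theorem Real.rpow_sum_le_sum_rpow {ι : Type*} (s : Finset ι) {f : ι → ℝ} (hf : ∀ i ∈ s, 0 ≤ f i)
    {p : ℝ} (hp0 : 0 < p) (hp1 : p ≤ 1) : (∑ i ∈ s, f i) ^ p ≤ ∑ i ∈ s, f i ^ p :=
  Finset.le_sum_of_subadditive_on_pred (· ^ p) (0 ≤ ·) (by simp [zero_rpow hp0.ne'])
    (fun _ _ hx hy => rpow_add_le_add_rpow hx hy hp0.le hp1) (fun _ _ => add_nonneg) f hf

theorem Real.exists_mem_lt_le_sSup {S : Set ℝ} (h0 : 0 < sSup S) {t : ℝ} (ht : t < sSup S) :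
    ∃ γ ∈ S, t < γ ∧ γ ≤ sSup S := by
  have hne : S.Nonempty := by
    by_contra h
    rw [not_nonempty_iff_eq_empty.1 h, Real.sSup_empty] at h0
    exact h0.false
  have hbdd : BddAbove S := by
    by_contra h
    rw [Real.sSup_of_not_bddAbove h] at h0
    exact h0.false
  obtain ⟨γ, hγ, htγ⟩ := exists_lt_of_lt_csSup hne ht
  exact ⟨γ, hγ, htγ, le_csSup hbdd hγ⟩

theorem le_mul_div_rpow_of_monotoneOn_of_doubling {f : ℝ → ℝ} {X δ : ℝ} (hX : 0 < X)
    (hδ : 0 ≤ δ) (hf : MonotoneOn f (Ici X)) (hfX : 0 ≤ f X)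
    (hdouble : ∀ x, X ≤ x → f (2 * x) ≤ 2 ^ δ * f x) :
    ∀ x, X ≤ x → f x ≤ 2 ^ δ * f X * (x / X) ^ δ := by
  have hfirst : ∀ x, X ≤ x → x ≤ 2 * X → f x ≤ 2 ^ δ * f X * (x / X) ^ δ := fun x hXx hx =>
    calc f x ≤ f (2 * X) := hf hXx (by simp only [mem_Ici]; linarith) hx
      _ ≤ 2 ^ δ * f X := hdouble X le_rfl
      _ ≤ 2 ^ δ * f X * (x / X) ^ δ :=
        le_mul_of_one_le_right (by positivity) (one_le_rpow ((one_le_div hX).2 hXx) hδ)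
  have hhalve : ∀ x, 2 * X ≤ x → f (x / 2) ≤ 2 ^ δ * f X * (x / 2 / X) ^ δ →
      f x ≤ 2 ^ δ * f X * (x / X) ^ δ := fun x hx hhalf =>
    calc f x = f (2 * (x / 2)) := by ring_nf
      _ ≤ 2 ^ δ * f (x / 2) := hdouble _ (by linarith)
      _ ≤ 2 ^ δ * (2 ^ δ * f X * (x / 2 / X) ^ δ) := by gcongr
      _ = 2 ^ δ * f X * (x / X) ^ δ := by
        rw [div_right_comm, div_rpow (div_nonneg (by linarith) hX.le) zero_le_two]
        field_simp
  have hcover : ∀ n : ℕ, ∀ x, X ≤ x → x ≤ 2 ^ n * X → f x ≤ 2 ^ δ * f X * (x / X) ^ δ := by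
    intro n
    induction n with
    | zero => exact fun x hXx hx => hfirst x hXx (by linarith)
    | succ n ih =>
      intro x hXx hx
      rcases le_or_gt x (2 * X) with h2X | h2X
      · exact hfirst x hXx h2X
      · exact hhalve x h2X.le (ih _ (by linarith) (by rw [pow_succ] at hx; linarith))
  intro x hXx
  obtain ⟨n, hn⟩ := pow_unbounded_of_one_lt (x / X) one_lt_two
  exact hcover n x hXx ((div_lt_iff₀ hX).1 hn).le

theorem exists_pos_eventually_le_mul_rpow_of_doubling {f : ℝ → ℝ} {δ : ℝ} (hδ : 0 ≤ δ)
    (hpos : ∀ᶠ x in atTop, 0 < f x)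
    (hmono : ∃ M, MonotoneOn f (Ici M) ∨ AntitoneOn f (Ici M))
    (hdouble : ∀ᶠ x in atTop, f (2 * x) ≤ 2 ^ δ * f x) :
    ∃ C, 0 < C ∧ ∀ᶠ x in atTop, f x ≤ C * x ^ δ := by
  obtain ⟨M, hM⟩ := hmono
  obtain ⟨X, hX⟩ := eventually_atTop.1 (hpos.and hdouble)
  set Y := max (max X M) 1
  have hXY : X ≤ Y := (le_max_left _ _).trans (le_max_left _ _)
  have hMY : Ici Y ⊆ Ici M := Ici_subset_Ici.2 ((le_max_right _ _).trans (le_max_left _ _))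
  have hY1 : 1 ≤ Y := le_max_right _ _
  have hfY : 0 < f Y := (hX Y hXY).1
  rcases hM with hmono | hanti
  · refine ⟨2 ^ δ * f Y / Y ^ δ, by positivity, ?_⟩
    filter_upwards [eventually_ge_atTop Y] with x hx
    calc f x ≤ 2 ^ δ * f Y * (x / Y) ^ δ :=
          le_mul_div_rpow_of_monotoneOn_of_doubling (by linarith) hδ (hmono.mono hMY) hfY.le
            (fun y hy => (hX y (hXY.trans hy)).2) x hx
      _ = 2 ^ δ * f Y / Y ^ δ * x ^ δ := by
        rw [div_rpow (by linarith) (by linarith)]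
        ring
  · refine ⟨f Y, hfY, ?_⟩
    filter_upwards [eventually_ge_atTop Y] with x hx
    calc f x ≤ f Y := hanti (hMY (mem_Ici.2 le_rfl)) (hMY hx) hx
      _ ≤ f Y * x ^ δ := le_mul_of_one_le_right hfY.le (one_le_rpow (hY1.trans hx) hδ)

theorem exists_monotoneOn_or_antitoneOn_inv {f : ℝ → ℝ} (hpos : ∀ᶠ x in atTop, 0 < f x)
    (hmono : ∃ M, MonotoneOn f (Ici M) ∨ AntitoneOn f (Ici M)) :
    ∃ M, MonotoneOn f⁻¹ (Ici M) ∨ AntitoneOn f⁻¹ (Ici M) := by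
  obtain ⟨M, hM⟩ := hmono
  obtain ⟨X, hX⟩ := eventually_atTop.1 hpos
  have hsub : Ici (max M X) ⊆ Ici M := Ici_subset_Ici.2 (le_max_left _ _)
  have hposM : ∀ x ∈ Ici (max M X), 0 < f x := fun x hx => hX x ((le_max_right _ _).trans hx)
  refine ⟨max M X, ?_⟩
  rcases hM with h | h
  · exact Or.inr fun x hx y hy hxy => inv_anti₀ (hposM x hx) (h (hsub hx) (hsub hy) hxy)
  · exact Or.inl fun x hx y hy hxy => inv_anti₀ (hposM y hy) (h (hsub hx) (hsub hy) hxy)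

theorem exists_potter_bounds {L : ℝ → ℝ} (hpos : ∀ᶠ x in atTop, 0 < L x)
    (hmono : ∃ M, MonotoneOn L (Ici M) ∨ AntitoneOn L (Ici M))
    (hL2 : Tendsto (fun x => L (2 * x) / L x) atTop (𝓝 1)) {δ : ℝ} (hδ : 0 < δ) :
    ∃ c C, 0 < c ∧ ∀ᶠ x in atTop, c * x ^ (-δ) ≤ L x ∧ L x ≤ C * x ^ δ := by
  have hlt : (2 : ℝ) ^ (-δ) < 1 := rpow_lt_one_of_one_lt_of_neg one_lt_two (neg_neg_of_pos hδ)
  have hgt : 1 < (2 : ℝ) ^ δ := one_lt_rpow one_lt_two hδ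
  have hratio : ∀ᶠ x in atTop, 2 ^ (-δ) < L (2 * x) / L x ∧ L (2 * x) / L x < 2 ^ δ :=
    (hL2.eventually (lt_mem_nhds hlt)).and (hL2.eventually (gt_mem_nhds hgt))
  obtain ⟨C, -, hC⟩ := exists_pos_eventually_le_mul_rpow_of_doubling hδ.le hpos hmono <| by
    filter_upwards [hratio, hpos] with x hx hLx
    exact ((div_lt_iff₀ hLx).1 hx.2).le
  obtain ⟨C', hC', hC'le⟩ := exists_pos_eventually_le_mul_rpow_of_doubling hδ.le
    (hpos.mono fun x hx => inv_pos.2 hx) (exists_monotoneOn_or_antitoneOn_inv hpos hmono) <| by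
    filter_upwards [hratio, hpos] with x hx hLx
    calc (L (2 * x))⁻¹ ≤ (2 ^ (-δ) * L x)⁻¹ :=
          inv_anti₀ (by positivity) ((lt_div_iff₀ hLx).1 hx.1).le
      _ = 2 ^ δ * (L x)⁻¹ := by rw [mul_inv, rpow_neg zero_le_two, inv_inv]
  refine ⟨C'⁻¹, C, inv_pos.2 hC', ?_⟩
  filter_upwards [hC, hC'le, hpos, eventually_gt_atTop 0] with x hx hx' hLx hx0
  refine ⟨?_, hx⟩
  rw [rpow_neg hx0.le, ← mul_inv]
  exact inv_le_of_inv_le₀ hLx hx'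

theorem tendsto_rpow_neg_mul_nhds_zero {L : ℝ → ℝ} {α C : ℝ} (hα : 0 < α)
    (hpos : ∀ᶠ x in atTop, 0 < L x) (hL : ∀ᶠ x in atTop, L x ≤ C * x ^ (α / 2)) :
    Tendsto (fun x => x ^ (-α) * L x) atTop (𝓝 0) := by
  have hdecay : Tendsto (fun x : ℝ => C * x ^ (-(α / 2))) atTop (𝓝 0) := by
    simpa using (tendsto_rpow_neg_atTop (half_pos hα)).const_mul C
  refine tendsto_of_tendsto_of_tendsto_of_le_of_le' tendsto_const_nhds hdecay ?_ ?_
  · filter_upwards [hpos, eventually_gt_atTop 0] with x hLx hx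
    positivity
  · filter_upwards [hL, eventually_gt_atTop 0] with x hLx hx
    calc x ^ (-α) * L x ≤ x ^ (-α) * (C * x ^ (α / 2)) := by gcongr
      _ = C * x ^ (-(α / 2)) := by
        rw [mul_left_comm, ← rpow_add hx]
        ring_nf

theorem tendsto_div_rpow_atTop_of_eventually_le {u : ℕ → ℝ} {c s q : ℝ} (hc : 0 < c)
    (hsq : s < q) (hu : ∀ᶠ h : ℕ in atTop, c * (h : ℝ) ^ (-s) ≤ u h) :
    Tendsto (fun h : ℕ => u h / (h : ℝ) ^ (-q)) atTop atTop := by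
  refine tendsto_atTop_mono' atTop ?_ <| ((tendsto_rpow_atTop (sub_pos.2 hsq)).comp
    tendsto_natCast_atTop_atTop).const_mul_atTop hc
  filter_upwards [hu, eventually_gt_atTop 0] with h hh hpos
  have hh0 : (0 : ℝ) < h := by exact_mod_cast hpos
  rw [le_div_iff₀ (rpow_pos_of_pos hh0 _), Function.comp_apply, mul_assoc, ← rpow_add hh0]
  rwa [show q - s + -q = -s by ring]

theorem exists_pos_eventually_mul_le_of_tendsto_div_atTop {u v : ℕ → ℝ}
    (hv : ∀ᶠ h in atTop, 0 < v h) (huv : Tendsto (fun h => u h / v h) atTop atTop) :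
    ∃ C, 0 < C ∧ ∀ᶠ h in atTop, C * v h ≤ u h := by
  refine ⟨1, one_pos, ?_⟩
  filter_upwards [hv, huv.eventually_ge_atTop 1] with h hvh hh
  rwa [one_mul, ← one_le_div hvh]

section RegularlyVaryingSequence

variable {L : ℝ → ℝ} {σX : ℕ → ℝ} {α : ℝ}

theorem exists_abs_le_of_eq_rpow_neg_mul (hα : 0 < α) (hLpos : ∀ᶠ x in atTop, 0 < L x)
    (hLmono : ∃ M, MonotoneOn L (Ici M) ∨ AntitoneOn L (Ici M))
    (hL2 : Tendsto (fun x => L (2 * x) / L x) atTop (𝓝 1))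
    (hσX : ∀ n : ℕ, 1 ≤ n → σX n = (n : ℝ) ^ (-α) * L n) :
    ∃ D, ∀ n, |σX n| ≤ D := by
  obtain ⟨_, C, _, hLup⟩ := exists_potter_bounds hLpos hLmono hL2 (half_pos hα)
  have hlim : Tendsto σX atTop (𝓝 0) :=
    ((tendsto_rpow_neg_mul_nhds_zero hα hLpos (hLup.mono fun _ hx => hx.2)).comp
      tendsto_natCast_atTop_atTop).congr' ((eventually_ge_atTop 1).mono fun n hn => (hσX n hn).symm)
  obtain ⟨D, hD⟩ := isBounded_iff_forall_norm_le.1 (Metric.isBounded_range_of_tendsto σX hlim)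
  exact ⟨D, fun n => (norm_eq_abs _).symm.trans_le (hD _ (mem_range_self n))⟩

theorem exists_mul_rpow_neg_le_of_eq_rpow_neg_mul (hLpos : ∀ᶠ x in atTop, 0 < L x)
    (hLmono : ∃ M, MonotoneOn L (Ici M) ∨ AntitoneOn L (Ici M))
    (hL2 : Tendsto (fun x => L (2 * x) / L x) atTop (𝓝 1))
    (hσX : ∀ n : ℕ, 1 ≤ n → σX n = (n : ℝ) ^ (-α) * L n) {δ : ℝ} (hδ : 0 < δ) :
    ∃ c, 0 < c ∧ ∃ N : ℕ, 1 ≤ N ∧ ∀ n, N ≤ n → c * (n : ℝ) ^ (-(α + δ)) ≤ σX n := by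
  obtain ⟨c, _, hc, hLlow⟩ := exists_potter_bounds hLpos hLmono hL2 hδ
  obtain ⟨N, hN⟩ := eventually_atTop.1 (tendsto_natCast_atTop_atTop.eventually hLlow)
  refine ⟨c, hc, max N 1, le_max_right _ _, fun n hn => ?_⟩
  have hn0 : (0 : ℝ) < n := by exact_mod_cast (le_max_right _ _).trans hn
  rw [hσX n ((le_max_right _ _).trans hn), neg_add, rpow_add hn0, mul_left_comm]
  exact mul_le_mul_of_nonneg_left (hN n ((le_max_left _ _).trans hn)).1 (by positivity)

end RegularlyVaryingSequence

section Probability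

variable {Ω : Type*} [MeasurableSpace Ω] {μ : Measure Ω}

theorem integrable_rpow_sum {ι : Type*} (s : Finset ι) {X : ι → Ω → ℝ} {p : ℝ} (hp0 : 0 < p)
    (hp1 : p ≤ 1) (hX : ∀ i, Measurable (X i)) (hX0 : ∀ i ω, 0 ≤ X i ω)
    (hint : ∀ i, Integrable (fun ω => X i ω ^ p) μ) :
    Integrable (fun ω => (∑ i ∈ s, X i ω) ^ p) μ := by
  refine (integrable_finsetSum s fun i _ => hint i).mono'
    ((s.measurable_sum fun i _ => hX i).pow_const p).aestronglyMeasurable (ae_of_all _ fun ω => ?_)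
  rw [norm_of_nonneg (rpow_nonneg (s.sum_nonneg fun i _ => hX0 i ω) p)]
  exact rpow_sum_le_sum_rpow s (fun i _ => hX0 i ω) hp0 hp1

theorem integral_rpow_sum_le {ι : Type*} (s : Finset ι) {X : ι → Ω → ℝ} {p : ℝ} (hp0 : 0 < p)
    (hp1 : p ≤ 1) (hX : ∀ i, Measurable (X i)) (hX0 : ∀ i ω, 0 ≤ X i ω)
    (hint : ∀ i, Integrable (fun ω => X i ω ^ p) μ) :
    ∫ ω, (∑ i ∈ s, X i ω) ^ p ∂μ ≤ ∑ i ∈ s, ∫ ω, X i ω ^ p ∂μ := by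
  rw [← integral_finsetSum s fun i _ => hint i]
  exact integral_mono (integrable_rpow_sum s hp0 hp1 hX hX0 hint)
    (integrable_finsetSum s fun i _ => hint i)
    fun ω => rpow_sum_le_sum_rpow s (fun i _ => hX0 i ω) hp0 hp1

variable {Δ : ℕ → Ω → ℕ} {γ : ℝ}

theorem integrable_and_integral_rpow_natCast_sum_range_le (hΔ : ∀ j, Measurable (Δ j))
    (hid : ∀ j, IdentDistrib (Δ j) (Δ 0) μ μ) (hγ0 : 0 < γ) (hγ1 : γ ≤ 1)
    (hint : Integrable (fun ω => (Δ 0 ω : ℝ) ^ γ) μ) (h : ℕ) :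
    Integrable (fun ω => ((∑ j ∈ Finset.range h, Δ j ω : ℕ) : ℝ) ^ γ) μ ∧
      ∫ ω, ((∑ j ∈ Finset.range h, Δ j ω : ℕ) : ℝ) ^ γ ∂μ ≤ h * ∫ ω, (Δ 0 ω : ℝ) ^ γ ∂μ := by
  have hid' : ∀ j, IdentDistrib (fun ω => (Δ j ω : ℝ) ^ γ) (fun ω => (Δ 0 ω : ℝ) ^ γ) μ μ :=
    fun j => (hid j).comp (Measurable.of_discrete (f := fun n : ℕ => (n : ℝ) ^ γ))
  have hX : ∀ j, Measurable fun ω => (Δ j ω : ℝ) := fun j => Measurable.of_discrete.comp (hΔ j)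
  have hXint : ∀ j, Integrable (fun ω => (Δ j ω : ℝ) ^ γ) μ :=
    fun j => (hid' j).integrable_iff.2 hint
  push_cast
  refine ⟨integrable_rpow_sum _ hγ0 hγ1 hX (fun _ _ => Nat.cast_nonneg _) hXint, ?_⟩
  calc _ ≤ ∑ j ∈ Finset.range h, ∫ ω, (Δ j ω : ℝ) ^ γ ∂μ :=
        integral_rpow_sum_le _ hγ0 hγ1 hX (fun _ _ => Nat.cast_nonneg _) hXint
    _ = h * ∫ ω, (Δ 0 ω : ℝ) ^ γ ∂μ := by simp [fun j => (hid' j).integral_eq]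

variable [IsProbabilityMeasure μ]

theorem half_mul_le_integral_of_le_of_lt_two_mul {F Z : Ω → ℝ} {a m : ℝ} (ha : 0 ≤ a)
    (hm : 0 < m) (hF : Integrable F μ) (hZ : Integrable Z μ) (hZ0 : ∀ ω, 0 ≤ Z ω)
    (hZm : ∫ ω, Z ω ∂μ ≤ m) (hF0 : ∀ ω, 0 ≤ F ω) (hFa : ∀ ω, Z ω < 2 * m → a ≤ F ω) :
    a / 2 ≤ ∫ ω, F ω ∂μ := by
  -- Markov's inequality, pointwise.
  have hpt : ∀ ω, a - a / (2 * m) * Z ω ≤ F ω := by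
    intro ω
    rcases lt_or_ge (Z ω) (2 * m) with h | h
    · have : 0 ≤ a / (2 * m) * Z ω := mul_nonneg (by positivity) (hZ0 ω)
      linarith [hFa ω h]
    · have : a ≤ a / (2 * m) * Z ω := by
        rw [div_mul_eq_mul_div, le_div_iff₀ (by positivity)]
        nlinarith
      linarith [hF0 ω]
  calc a / 2 = a - a / (2 * m) * m := by field_simp; ring
    _ ≤ a - a / (2 * m) * ∫ ω, Z ω ∂μ := by gcongr
    _ = ∫ ω, (a - a / (2 * m) * Z ω) ∂μ := by
      rw [integral_sub (integrable_const a) (hZ.const_mul _), integral_const_mul]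
      simp
    _ ≤ ∫ ω, F ω ∂μ := integral_mono ((integrable_const a).sub (hZ.const_mul _)) hF hpt

theorem half_mul_rpow_le_integral_comp_of_moment {T : Ω → ℕ} {g : ℕ → ℝ} {N : ℕ}
    {c r γ m : ℝ} (hc : 0 ≤ c) (hr : 0 ≤ r) (hγ : 0 < γ) (hm : 0 < m) (hN : 1 ≤ N)
    (hTN : ∀ ω, N ≤ T ω) (hg : ∀ n, N ≤ n → c * (n : ℝ) ^ (-r) ≤ g n)
    (hgT : Integrable (fun ω => g (T ω)) μ) (hTγ : Integrable (fun ω => (T ω : ℝ) ^ γ) μ)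
    (hmom : ∫ ω, (T ω : ℝ) ^ γ ∂μ ≤ m) :
    c * (2 * m) ^ (-(r / γ)) / 2 ≤ ∫ ω, g (T ω) ∂μ := by
  refine half_mul_le_integral_of_le_of_lt_two_mul (by positivity) hm hgT hTγ
    (fun ω => by positivity) hmom (fun ω => (by positivity : 0 ≤ c * _).trans (hg _ (hTN ω)))
    fun ω hω => ?_
  have hT0 : (0 : ℝ) < T ω := by exact_mod_cast hN.trans (hTN ω)
  calc c * (2 * m) ^ (-(r / γ)) ≤ c * ((T ω : ℝ) ^ γ) ^ (-(r / γ)) :=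
        mul_le_mul_of_nonneg_left
          (rpow_le_rpow_of_nonpos (by positivity) hω.le (neg_nonpos.2 (by positivity))) hc
    _ = c * (T ω : ℝ) ^ (-r) := by
        rw [← rpow_mul hT0.le]
        field_simp
    _ ≤ g (T ω) := hg _ (hTN ω)

theorem exists_pos_mul_rpow_le_integral_comp_sum {g : ℕ → ℝ} {D c r : ℝ} {N : ℕ}
    (hD : ∀ n, |g n| ≤ D) (hc : 0 < c) (hr : 0 ≤ r) (hN : 1 ≤ N)
    (hg : ∀ n, N ≤ n → c * (n : ℝ) ^ (-r) ≤ g n) (hΔ : ∀ j, Measurable (Δ j))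
    (hΔpos : ∀ j ω, 1 ≤ Δ j ω) (hid : ∀ j, IdentDistrib (Δ j) (Δ 0) μ μ) (hγ0 : 0 < γ)
    (hγ1 : γ ≤ 1) (hint : Integrable (fun ω => (Δ 0 ω : ℝ) ^ γ) μ) :
    ∃ c', 0 < c' ∧ ∀ h, N ≤ h →
      c' * (h : ℝ) ^ (-(r / γ)) ≤ ∫ ω, g (∑ j ∈ Finset.range h, Δ j ω) ∂μ := by
  set K := ∫ ω, (Δ 0 ω : ℝ) ^ γ ∂μ
  have hK : 1 ≤ K := by
    simpa using integral_mono (integrable_const 1) hint fun ω =>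
      one_le_rpow (Nat.one_le_cast.2 (hΔpos 0 ω)) hγ0.le
  refine ⟨c * (2 * K) ^ (-(r / γ)) / 2, by positivity, fun h hNh => ?_⟩
  have hsum : ∀ ω, N ≤ ∑ j ∈ Finset.range h, Δ j ω := fun ω => hNh.trans <| by
    simpa using Finset.card_nsmul_le_sum (Finset.range h) (fun j => Δ j ω) 1 fun j _ => hΔpos j ω
  have hgint : Integrable (fun ω => g (∑ j ∈ Finset.range h, Δ j ω)) μ :=
    Integrable.of_bound (Measurable.of_discrete.comp
      (Finset.measurable_sum _ fun j _ => hΔ j)).aestronglyMeasurable D (ae_of_all _ fun _ => hD _)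
  obtain ⟨hmom_int, hmom⟩ :=
    integrable_and_integral_rpow_natCast_sum_range_le hΔ hid hγ0 hγ1 hint h
  have hh : (0 : ℝ) < h := by exact_mod_cast hN.trans hNh
  calc c * (2 * K) ^ (-(r / γ)) / 2 * (h : ℝ) ^ (-(r / γ))
      = c * (2 * (h * K)) ^ (-(r / γ)) / 2 := by
        rw [show 2 * (h * K) = 2 * K * h by ring, mul_rpow (by positivity) hh.le]
        ring
    _ ≤ _ := half_mul_rpow_le_integral_comp_of_moment hc.le hr hγ0 (by positivity) hN hsum hg
        hgint hmom_int hmom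

end Probability

theorem sampled_cov_lower_bound_heavy_tail_general
    {Ω : Type*} [MeasureSpace Ω] [IsProbabilityMeasure (ℙ : Measure Ω)]
    (α : ℝ) (hα0 : 0 < α)
    (L : ℝ → ℝ) (hLpos : ∀ x, 0 < x → 0 < L x)
    (hLslow : ∀ c : ℝ, 0 < c → Tendsto (fun x : ℝ => L (c * x) / L x) atTop (nhds 1))
    (hLmono : ∃ M : ℝ, MonotoneOn L (Set.Ici M) ∨ AntitoneOn L (Set.Ici M))
    (σX : ℕ → ℝ) (hσX : ∀ h : ℕ, 1 ≤ h → σX h = (h : ℝ) ^ (-α) * L h)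
    (Δ : ℕ → Ω → ℕ)
    (hΔmeas : ∀ j, Measurable (Δ j))
    (hΔpos : ∀ j ω, 1 ≤ Δ j ω)
    (hΔid : ∀ i j, IdentDistrib (Δ i) (Δ j))
    (β : ℝ)
    (hβ : β = sSup {γ : ℝ | 0 < γ ∧ Integrable (fun ω => (Δ 0 ω : ℝ) ^ γ)})
    (hβ0 : 0 < β) (hβ1 : β < 1)
    (T : ℕ → Ω → ℕ) (hT : ∀ n ω, T n ω = ∑ j ∈ Finset.range n, Δ j ω)
    (σY : ℕ → ℝ) (hσY : ∀ h, σY h = ∫ ω, σX (T h ω)) :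
    ∀ ε : ℝ, 0 < ε →
      (∃ C₁ : ℝ, 0 < C₁ ∧ ∀ᶠ h : ℕ in atTop,
        C₁ * (h : ℝ) ^ (-(α / β) - ε) ≤ σY h) ∧
      Tendsto (fun h : ℕ => σY h / (h : ℝ) ^ (-(α / β) - ε)) atTop atTop := by
  intro ε hε
  suffices hlim : Tendsto (fun h : ℕ => σY h / (h : ℝ) ^ (-(α / β) - ε)) atTop atTop from
    ⟨exists_pos_eventually_mul_le_of_tendsto_div_atTop
      ((eventually_gt_atTop 0).mono fun h hh => by positivity) hlim, hlim⟩
  have hLpos' : ∀ᶠ x in atTop, 0 < L x := (eventually_gt_atTop 0).mono hLpos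
  have hL2 := hLslow 2 two_pos
  obtain ⟨D, hD⟩ := exists_abs_le_of_eq_rpow_neg_mul hα0 hLpos' hLmono hL2 hσX
  -- `δ` is the loss in the Potter bound and `γ < β` an exponent with `E[Δ₀^γ] < ∞`, chosen so
  -- that `(α + δ) / γ < α / β + ε`.
  set δ := ε * β / 2 with hδ
  have hq : 0 < α / β + ε := by positivity
  obtain ⟨γ, ⟨hγ0, hγint⟩, hγt, hγβ⟩ := Real.exists_mem_lt_le_sSup (hβ ▸ hβ0)
    (t := (α + δ) / (α / β + ε)) <| hβ ▸ by
      rw [div_lt_iff₀ hq, mul_add, mul_div_cancel₀ _ hβ0.ne']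
      linarith [mul_pos hβ0 hε, hδ]
  obtain ⟨c, hc, N, hN, hlow⟩ :=
    exists_mul_rpow_neg_le_of_eq_rpow_neg_mul hLpos' hLmono hL2 hσX (by positivity : 0 < δ)
  obtain ⟨c', hc', hmain⟩ := exists_pos_mul_rpow_le_integral_comp_sum hD hc (by positivity) hN
    hlow hΔmeas hΔpos (fun j => hΔid j 0) hγ0 ((hβ ▸ hγβ).trans hβ1.le) hγint
  rw [show -(α / β) - ε = -(α / β + ε) by ring]
  refine tendsto_div_rpow_atTop_of_eventually_le hc' ?_
    ((eventually_ge_atTop N).mono fun h hh => by simpa only [hσY, hT] using hmain h hh)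
  rwa [div_lt_iff₀ hγ0, ← div_lt_iff₀' hq]

/-- Lower bound on the sampled covariance: if `σ_X(h) = h^{-α}L(h)` with `0 < α < 1`,
`L` slowly varying and ultimately monotone, and `β = sup{γ : E[T₁^γ] < ∞} ∈ (0,1)`,
then for every `ε > 0` one has `σ_Y(h) ≥ C₁ h^{-α/β-ε}` for large `h`; in fact
`σ_Y(h)/h^{-α/β-ε} → ∞`. -/
theorem sampled_cov_lower_bound_heavy_tail
    {Ω : Type*} [MeasureSpace Ω] [IsProbabilityMeasure (ℙ : Measure Ω)]
    (α : ℝ) (hα0 : 0 < α) (hα1 : α < 1)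
    (L : ℝ → ℝ) (hLpos : ∀ x, 0 < x → 0 < L x)
    (hLslow : ∀ c : ℝ, 0 < c → Tendsto (fun x : ℝ => L (c * x) / L x) atTop (nhds 1))
    (hLmono : ∃ M : ℝ, MonotoneOn L (Set.Ici M) ∨ AntitoneOn L (Set.Ici M))
    (σX : ℕ → ℝ) (hσX : ∀ h : ℕ, 1 ≤ h → σX h = (h : ℝ) ^ (-α) * L h)
    (Δ : ℕ → Ω → ℕ)
    (hΔmeas : ∀ j, Measurable (Δ j))
    (hΔpos : ∀ j ω, 1 ≤ Δ j ω)
    (hΔindep : iIndepFun Δ)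
    (hΔid : ∀ i j, IdentDistrib (Δ i) (Δ j))
    (β : ℝ)
    (hβ : β = sSup {γ : ℝ | 0 < γ ∧ Integrable (fun ω => (Δ 0 ω : ℝ) ^ γ)})
    (hβ0 : 0 < β) (hβ1 : β < 1)
    (T : ℕ → Ω → ℕ) (hT : ∀ n ω, T n ω = ∑ j ∈ Finset.range n, Δ j ω)
    (σY : ℕ → ℝ) (hσY : ∀ h, σY h = ∫ ω, σX (T h ω)) :
    ∀ ε : ℝ, 0 < ε →
      (∃ C₁ : ℝ, 0 < C₁ ∧ ∀ᶠ h : ℕ in atTop,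
        C₁ * (h : ℝ) ^ (-(α / β) - ε) ≤ σY h) ∧
      Tendsto (fun h : ℕ => σY h / (h : ℝ) ^ (-(α / β) - ε)) atTop atTop :=
  sampled_cov_lower_bound_heavy_tail_general α hα0 L hLpos hLslow hLmono σX hσX Δ hΔmeas hΔpos hΔid
    β hβ hβ0 hβ1 T hT σY hσY
end
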